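/- For a linear subspace W of ℝ^n defined over ℚ, let P = W ∩ [-1,1]^n. Then for every positive integer m, the set of integer points in the relative interior of mP equals the set of integer points in (m-1)P; i.e., m·P° ∩ ℤ^n = (m-1)·P ∩ ℤ^n. -/

import Mathlib

/-!
On `Fin n → ℝ` the cube `[-1,1]^n` is the closed unit ball of the sup norm. Since `W` is a
subspace through the centre of the ball, the affine span of `P = W ∩ B̄(0,1)` is `W` and its
relative interior is `W ∩ B(0,1)`. Dilating, `m • P° = W ∩ B(0,m)` and `(m-1) • P = W ∩ B̄(0,m-1)`,
and an integer vector has sup norm `< m` exactly when it has sup norm `≤ m - 1`.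
-/

open scoped Pointwise
open Metric Set

theorem intrinsicInterior_eq_interior_of_affineSpan_eq_top {𝕜 V P : Type*} [Ring 𝕜]
    [AddCommGroup V] [Module 𝕜 V] [TopologicalSpace P] [AddTorsor V P] {s : Set P}
    (h : affineSpan 𝕜 s = ⊤) : intrinsicInterior 𝕜 s = interior s := by
  have hval : IsOpenMap (Subtype.val : (⊤ : AffineSubspace 𝕜 P) → P) :=
    (AffineSubspace.top_coe 𝕜 V P ▸ isOpen_univ).isOpenMap_subtype_val
  rw [intrinsicInterior, h, ← hval.preimage_interior_eq_interior_preimage continuous_subtype_val,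
    image_preimage_eq_of_subset fun x _ => ⟨⟨x, AffineSubspace.mem_top 𝕜 V x⟩, rfl⟩]

section NormedSpace

variable {E : Type*} [NormedAddCommGroup E] [NormedSpace ℝ E]

theorem intrinsicInterior_closedBall (x : E) {r : ℝ} (hr : 0 < r) :
    intrinsicInterior ℝ (closedBall x r) = ball x r := by
  have hspan : affineSpan ℝ (closedBall x r) = ⊤ :=
    top_unique <| (isOpen_ball.affineSpan_eq_top ⟨x, mem_ball_self hr⟩).ge.trans
      (affineSpan_mono ℝ ball_subset_closedBall)
  rw [intrinsicInterior_eq_interior_of_affineSpan_eq_top hspan, interior_closedBall x hr.ne']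

namespace Submodule

variable (W : Submodule ℝ E)

theorem intrinsicInterior_inter_closedBall {r : ℝ} (hr : 0 < r) :
    intrinsicInterior ℝ ((W : Set E) ∩ closedBall 0 r) = (W : Set E) ∩ ball 0 r := by
  have himage : ∀ t : Set E, W.subtypeₗᵢ.toAffineIsometry '' ((↑) ⁻¹' t) = (W : Set E) ∩ t :=
    fun t => Subtype.image_preimage_coe _ t
  rw [← himage, ← himage, AffineIsometry.intrinsicInterior_image]
  exact congrArg _ (intrinsicInterior_closedBall (0 : W) hr)

theorem smul_coe_eq_self {c : ℝ} (hc : c ≠ 0) : c • (W : Set E) = W := by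
  ext x
  rw [mem_smul_set_iff_inv_smul_mem₀ hc, SetLike.mem_coe, SetLike.mem_coe,
    W.smul_mem_iff (inv_ne_zero hc)]

theorem smul_inter_ball {c : ℝ} (hc : 0 < c) (r : ℝ) :
    c • ((W : Set E) ∩ ball 0 r) = (W : Set E) ∩ ball 0 (c * r) := by
  rw [smul_set_inter₀ hc.ne', _root_.smul_ball hc.ne', smul_zero, Real.norm_of_nonneg hc.le,
    W.smul_coe_eq_self hc.ne']

theorem smul_inter_closedBall {c r : ℝ} (hc : 0 ≤ c) (hr : 0 ≤ r) :
    c • ((W : Set E) ∩ closedBall 0 r) = (W : Set E) ∩ closedBall 0 (c * r) := by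
  rcases hc.eq_or_lt with rfl | hc
  · rw [zero_smul_set (s := (W : Set E) ∩ closedBall 0 r) ⟨0, W.zero_mem, mem_closedBall_self hr⟩,
      zero_mul, closedBall_zero, inter_eq_right.2 (singleton_subset_iff.2 W.zero_mem),
      singleton_zero]
  rw [smul_set_inter₀ hc.ne', smul_closedBall' hc.ne', smul_zero, Real.norm_of_nonneg hc.le,
    W.smul_coe_eq_self hc.ne']

end Submodule

end NormedSpace

theorem norm_intCast_lt_iff_le_sub_one {ι : Type*} [Fintype ι] (z : ι → ℤ) {m : ℕ} (hm : 0 < m) :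
    ‖fun i => (z i : ℝ)‖ < m ↔ ‖fun i => (z i : ℝ)‖ ≤ (m : ℝ) - 1 := by
  have hm' : (0 : ℝ) ≤ m - 1 := sub_nonneg.2 (Nat.one_le_cast.2 hm)
  rw [pi_norm_lt_iff (by positivity), pi_norm_le_iff_of_nonneg hm']
  refine forall_congr' fun i => ?_
  rw [Real.norm_eq_abs, ← Int.cast_abs, ← Int.cast_natCast, ← Int.cast_one, ← Int.cast_sub,
    Int.cast_lt, Int.cast_le, Int.le_sub_one_iff]

theorem setOf_forall_abs_le_eq_closedBall {ι : Type*} [Fintype ι] {r : ℝ} (hr : 0 ≤ r) :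
    {x : ι → ℝ | ∀ i, |x i| ≤ r} = closedBall 0 r := by
  ext x
  simp only [mem_ofPred_eq, mem_closedBall_zero_iff, pi_norm_le_iff_of_nonneg hr, Real.norm_eq_abs]

theorem stmt0_general (n : ℕ) (W : Submodule ℝ (Fin n → ℝ))
    (P : Set (Fin n → ℝ)) (hP : P = (W : Set (Fin n → ℝ)) ∩ {x | ∀ i, |x i| ≤ 1})
    (m : ℕ) (hm : 0 < m) :
    {z : Fin n → ℤ | (fun i => ((z i : ℤ) : ℝ)) ∈ (m : ℝ) • intrinsicInterior ℝ P} =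
    {z : Fin n → ℤ | (fun i => ((z i : ℤ) : ℝ)) ∈ ((m : ℝ) - 1) • P} := by
  have hm' : (0 : ℝ) ≤ m - 1 := sub_nonneg.2 (Nat.one_le_cast.2 hm)
  rw [hP, setOf_forall_abs_le_eq_closedBall zero_le_one,
    W.intrinsicInterior_inter_closedBall one_pos, W.smul_inter_ball (by positivity),
    W.smul_inter_closedBall hm' zero_le_one]
  ext z
  simp only [mem_ofPred_eq, mem_inter_iff, mem_ball_zero_iff, mem_closedBall_zero_iff, mul_one]
  exact and_congr_right' (norm_intCast_lt_iff_le_sub_one z hm)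

/-- For a linear subspace `W` of `ℝ^n` defined over `ℚ` (spanned by rational
vectors) and `P = W ∩ [-1,1]^n`, for every positive integer `m` the integer points of the
dilate `m · P°` of the relative interior of `P` coincide with the integer points of
`(m-1) · P`. -/
theorem stmt0 (n : ℕ) (W : Submodule ℝ (Fin n → ℝ))
    (hW : ∃ S : Set (Fin n → ℚ),
      W = Submodule.span ℝ ((fun v : Fin n → ℚ => fun i => ((v i : ℚ) : ℝ)) '' S))
    (P : Set (Fin n → ℝ)) (hP : P = (W : Set (Fin n → ℝ)) ∩ {x | ∀ i, |x i| ≤ 1})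
    (m : ℕ) (hm : 0 < m) :
    {z : Fin n → ℤ | (fun i => ((z i : ℤ) : ℝ)) ∈ (m : ℝ) • intrinsicInterior ℝ P} =
    {z : Fin n → ℤ | (fun i => ((z i : ℤ) : ℝ)) ∈ ((m : ℝ) - 1) • P} :=
  stmt0_general n W P hP m hm
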